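/- Let G = (V,E) be a finite connected simple graph, let U ⊆ V be self-contained in G, and let S ⊆ U be nonempty. Define W = (N(S) ∩ U) ∖ S and for a ∈ W the cluster B(a) = {x ∈ U ∖ S : δ(a,x) ≤ δ(S,x)}. Then every vertex x ∈ U ∖ S belongs to B(a) for some a ∈ W. -/

import Mathlib

open SimpleGraph

/-- Distance from a set of vertices: `δ(S, v) = min_{s ∈ S} δ(s, v)`. -/
noncomputable def setDist {V : Type*} (G : SimpleGraph V) (S : Set V) (v : V) : ℕ :=
  sInf {d | ∃ s ∈ S, G.dist s v = d}

/-- `N(S) = {w : δ(S, w) ≤ 1}`. -/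
noncomputable def nbrSet {V : Type*} (G : SimpleGraph V) (S : Set V) : Set V :=
  {w | setDist G S w ≤ 1}

/-- `W = (N(S) ∩ U) \ S`. -/
noncomputable def Wset {V : Type*} (G : SimpleGraph V) (U S : Set V) : Set V :=
  (nbrSet G S ∩ U) \ S

/-- The cluster `B(a) = {x ∈ U \ S : δ(a,x) ≤ δ(S,x)}`. -/
noncomputable def cluster {V : Type*} (G : SimpleGraph V) (U S : Set V) (a : V) : Set V :=
  {x ∈ U \ S | G.dist a x ≤ setDist G S x}

/-- `U` is self-contained in `G`. -/
def SelfContained {V : Type*} (G : SimpleGraph V) (U : Set V) : Prop :=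
  ∀ x ∈ U, ∀ y ∈ U, ∀ z : V, G.dist x z + G.dist z y = G.dist x y → z ∈ U


namespace SimpleGraph

variable {V : Type*} {G : SimpleGraph V}

lemma Reachable.exists_adj_dist_add_one_eq {u v : V} (h : G.Reachable u v) (hne : u ≠ v) :
    ∃ w, G.Adj u w ∧ G.dist w v + 1 = G.dist u v := by
  obtain ⟨p, hp⟩ := h.exists_walk_length_eq_dist
  cases p with
  | nil => exact absurd rfl hne
  | @cons _ w _ hadj q =>
    refine ⟨w, hadj, le_antisymm ?_ ?_⟩
    · have := G.dist_le q
      rw [← hp, Walk.length_cons]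
      omega
    · have := Reachable.dist_triangle_right (G := G) ⟨q⟩ u
      rw [dist_eq_one_iff_adj.mpr hadj] at this
      omega

end SimpleGraph

section setDist

variable {V : Type*} {G : SimpleGraph V} {S : Set V}

lemma setDist_le_dist {s : V} (hs : s ∈ S) (v : V) : setDist G S v ≤ G.dist s v :=
  Nat.sInf_le ⟨s, hs, rfl⟩

lemma exists_dist_eq_setDist (hS : S.Nonempty) (v : V) : ∃ s ∈ S, G.dist s v = setDist G S v :=
  Nat.sInf_mem (hS.image (G.dist · v))

lemma mem_nbrSet_of_adj {s a : V} (hs : s ∈ S) (hadj : G.Adj s a) : a ∈ nbrSet G S :=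
  (setDist_le_dist hs a).trans (G.dist_eq_one_iff_adj.mpr hadj).le

end setDist

theorem stmt_13_general {V : Type*} (G : SimpleGraph V) (hG : G.Connected)
    (U : Set V) (hU : SelfContained G U) (S : Set V) (hSU : S ⊆ U) (hS : S.Nonempty) :
    ∀ x ∈ U \ S, ∃ a ∈ Wset G U S, x ∈ cluster G U S a := by
  rintro x ⟨hxU, hxS⟩
  obtain ⟨s, hsS, hsx⟩ := exists_dist_eq_setDist (G := G) hS x
  -- The first step `a` of a shortest path from a nearest point `s` of `S` to `x` does the job.
  obtain ⟨a, hsa, hax⟩ := (hG s x).exists_adj_dist_add_one_eq (ne_of_mem_of_not_mem hsS hxS)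
  have hsa_dist : G.dist s a = 1 := G.dist_eq_one_iff_adj.mpr hsa
  have haU : a ∈ U := hU s (hSU hsS) x hxU a (by omega)
  have haS : a ∉ S := fun haS => by
    have := setDist_le_dist (G := G) haS x
    omega
  exact ⟨a, ⟨⟨mem_nbrSet_of_adj hsS hsa, haU⟩, haS⟩, ⟨hxU, hxS⟩, by omega⟩

theorem stmt_13 {V : Type*} [Fintype V] (G : SimpleGraph V) (hG : G.Connected)
    (U : Set V) (hU : SelfContained G U) (S : Set V) (hSU : S ⊆ U) (hS : S.Nonempty) :
    ∀ x ∈ U \ S, ∃ a ∈ Wset G U S, x ∈ cluster G U S a :=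
  stmt_13_general G hG U hU S hSU hS
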